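/- arXiv:2306.16106 — 3 statements merged into one kernel-verified Lean document; each statement's English description precedes it below -/
import Mathlib

section
/- Let a_1, b_1, a_n, b_n be nonzero complex numbers and set α = a_1 b_n - a_n b_1. Viewing f = t·x - a_1 t^2 - b_1 and g = t·y - a_n t^2 - b_n as polynomials in t with coefficients in ℂ[x,y], their resultant with respect to t equals a_n b_n x^2 - (a_1 b_n + a_n b_1)·x·y + a_1 b_1 y^2 + α^2. Moreover, if α ≠ 0, this resultant is an irreducible polynomial in ℂ[x,y]. -/
open MvPolynomial

private lemma aux_irred {R : Type*} [CommRing R] [IsDomain R] (p : Polynomial R)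
    (hdeg : p.natDegree = 1) (h0 : IsUnit (p.coeff 0)) : Irreducible p := by
  constructor
  · exact p.not_isUnit_of_natDegree_pos (by omega)
  · intro a b hab
    have hp : p ≠ 0 := fun h => by simp [h] at hdeg
    have ha : a ≠ 0 := fun h => hp (by simp [hab, h])
    have hb : b ≠ 0 := fun h => hp (by simp [hab, h])
    have hnd : a.natDegree + b.natDegree = 1 := by
      rw [← Polynomial.natDegree_mul ha hb, ← hab, hdeg]
    have h0' : IsUnit (a.coeff 0 * b.coeff 0) := by
      rwa [← Polynomial.mul_coeff_zero, ← hab]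
    rcases Nat.eq_zero_or_pos a.natDegree with h | h
    · left
      rw [Polynomial.eq_C_of_natDegree_eq_zero h, Polynomial.isUnit_C]
      exact isUnit_of_mul_isUnit_left h0'
    · right
      have hb0 : b.natDegree = 0 := by omega
      rw [Polynomial.eq_C_of_natDegree_eq_zero hb0, Polynomial.isUnit_C]
      exact isUnit_of_mul_isUnit_right h0'

private lemma irr_XY (c : ℂ) (hc : c ≠ 0) :
    Irreducible (X 0 * X 1 + C c : MvPolynomial (Fin 2) ℂ) := by
  rw [← MulEquiv.irreducible_iff (finSuccEquiv ℂ 1)]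
  have h1 : (X 1 : MvPolynomial (Fin 2) ℂ) = X (Fin.succ 0) := rfl
  have himg : finSuccEquiv ℂ 1 (X 0 * X 1 + C c) =
      Polynomial.C (X 0 : MvPolynomial (Fin 1) ℂ) * Polynomial.X + Polynomial.C (C c) := by
    have hC : finSuccEquiv ℂ 1 (C c) = Polynomial.C (C c) := by
      simp [finSuccEquiv_apply]
    rw [map_add, map_mul, h1, finSuccEquiv_X_zero, finSuccEquiv_X_succ, hC]
    ring
  rw [himg]
  apply aux_irred
  · exact Polynomial.natDegree_linear (by simp)
  · simp only [Polynomial.coeff_add, Polynomial.mul_coeff_zero, Polynomial.coeff_C_zero,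
      Polynomial.coeff_X_zero, mul_zero, zero_add]
    exact (Ne.isUnit hc).map C

private lemma irr_main (a₁ b₁ aₙ bₙ : ℂ) (hα : a₁ * bₙ - aₙ * b₁ ≠ 0) :
    Irreducible (C (aₙ * bₙ) * X 0 ^ 2 - C (a₁ * bₙ + aₙ * b₁) * (X 0 * X 1)
        + C (a₁ * b₁) * X 1 ^ 2 + C ((a₁ * bₙ - aₙ * b₁) ^ 2) : MvPolynomial (Fin 2) ℂ) := by
  set β : ℂ := (a₁ * bₙ - aₙ * b₁)⁻¹ with hβ
  have hαβ : (a₁ * bₙ - aₙ * b₁) * β = 1 := mul_inv_cancel₀ hα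
  have h : ((C a₁ * C bₙ - C aₙ * C b₁) * C β : MvPolynomial (Fin 2) ℂ) = 1 := by
    rw [← C_mul, ← C_mul, ← C_sub, ← C_mul, hαβ, C_1]
  let F : MvPolynomial (Fin 2) ℂ →ₐ[ℂ] MvPolynomial (Fin 2) ℂ :=
    aeval ![C aₙ * X 0 - C a₁ * X 1, C bₙ * X 0 - C b₁ * X 1]
  let G : MvPolynomial (Fin 2) ℂ →ₐ[ℂ] MvPolynomial (Fin 2) ℂ :=
    aeval ![C (-b₁) * C β * X 0 + C a₁ * C β * X 1, C (-bₙ) * C β * X 0 + C aₙ * C β * X 1]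
  have hFG : F.comp G = AlgHom.id ℂ _ := by
    apply MvPolynomial.algHom_ext
    intro i
    fin_cases i <;> simp [F, G]
    · linear_combination (X 0 : MvPolynomial (Fin 2) ℂ) * h
    · linear_combination (X 1 : MvPolynomial (Fin 2) ℂ) * h
  have hGF : G.comp F = AlgHom.id ℂ _ := by
    apply MvPolynomial.algHom_ext
    intro i
    fin_cases i <;> simp [F, G]
    · linear_combination (X 0 : MvPolynomial (Fin 2) ℂ) * h
    · linear_combination (X 1 : MvPolynomial (Fin 2) ℂ) * h
  let e : MvPolynomial (Fin 2) ℂ ≃ₐ[ℂ] MvPolynomial (Fin 2) ℂ := AlgEquiv.ofAlgHom F G hFG hGF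
  have key : (C (aₙ * bₙ) * X 0 ^ 2 - C (a₁ * bₙ + aₙ * b₁) * (X 0 * X 1)
        + C (a₁ * b₁) * X 1 ^ 2 + C ((a₁ * bₙ - aₙ * b₁) ^ 2) : MvPolynomial (Fin 2) ℂ)
      = e (X 0 * X 1 + C ((a₁ * bₙ - aₙ * b₁) ^ 2)) := by
    show _ = F _
    simp [F, C_mul, C_add, C_sub, C_pow]
    ring
  rw [key, MulEquiv.irreducible_iff]
  exact irr_XY _ (pow_ne_zero 2 hα)

/-- The resultant (the determinant of the 4×4 Sylvester matrix) of
`f = t·x - a₁t² - b₁` and `g = t·y - aₙt² - bₙ`, viewed as polynomials in `t` with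
coefficients in `ℂ[x,y]`, equals
`aₙbₙ x² - (a₁bₙ + aₙb₁) x y + a₁b₁ y² + α²` where `α = a₁bₙ - aₙb₁`; moreover, if
`α ≠ 0`, this polynomial is irreducible in `ℂ[x,y]`. -/
theorem sylvester_resultant_formula (a₁ b₁ aₙ bₙ : ℂ)
    (ha₁ : a₁ ≠ 0) (hb₁ : b₁ ≠ 0) (haₙ : aₙ ≠ 0) (hbₙ : bₙ ≠ 0) :
    (Matrix.det !![-(C a₁ : MvPolynomial (Fin 2) ℂ), 0, -C aₙ, 0;
        X 0, -C a₁, X 1, -C aₙ;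
        -C b₁, X 0, -C bₙ, X 1;
        0, -C b₁, 0, -C bₙ] =
      C (aₙ * bₙ) * X 0 ^ 2 - C (a₁ * bₙ + aₙ * b₁) * (X 0 * X 1)
        + C (a₁ * b₁) * X 1 ^ 2 + C ((a₁ * bₙ - aₙ * b₁) ^ 2)) ∧
    (a₁ * bₙ - aₙ * b₁ ≠ 0 →
      Irreducible (C (aₙ * bₙ) * X 0 ^ 2 - C (a₁ * bₙ + aₙ * b₁) * (X 0 * X 1)
        + C (a₁ * b₁) * X 1 ^ 2 + C ((a₁ * bₙ - aₙ * b₁) ^ 2) : MvPolynomial (Fin 2) ℂ)) := by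
  constructor
  · simp [Matrix.det_succ_row_zero, Fin.sum_univ_succ, Fin.succAbove, C_mul, C_add, C_sub, C_pow]
    ring
  · intro hα
    exact irr_main a₁ b₁ aₙ bₙ hα
end

section
/- Let a_1, b_1, a_n, b_n ∈ ℂ* with α = a_1 b_n - a_n b_1, and let r_1(t) = (a_1 t^2 + b_1)/t and r_n(t) = (a_n t^2 + b_n)/t. Then there exists a nonzero irreducible polynomial h ∈ ℂ[x,y] with h(r_1(t), r_n(t)) = 0 identically on ℂ*, deg(h) ≤ 2, and deg(h) = 1 if and only if α = 0. -/
open MvPolynomial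

/-- A degree-one polynomial over a domain whose constant coefficient or leading coefficient
is a unit is irreducible. -/
lemma aux_irred_of_natDegree_one {R : Type*} [CommRing R] [IsDomain R] (q : Polynomial R)
    (hdeg : q.natDegree = 1)
    (hu : IsUnit (q.coeff 0) ∨ IsUnit q.leadingCoeff) : Irreducible q := by
  have hq0 : q ≠ 0 := fun h => by simp [h] at hdeg
  refine ⟨Polynomial.not_isUnit_of_natDegree_pos q (by omega), ?_⟩
  intro f g hfg
  have hf0 : f ≠ 0 := fun h => hq0 (by simp [hfg, h])
  have hg0 : g ≠ 0 := fun h => hq0 (by simp [hfg, h])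
  have hsum : f.natDegree + g.natDegree = 1 := by
    rw [← Polynomial.natDegree_mul hf0 hg0, ← hfg, hdeg]
  have key : ∀ p r : Polynomial R, q = p * r → r.natDegree = 0 → IsUnit r := by
    intro p r hpr hr0
    obtain hc := Polynomial.eq_C_of_natDegree_eq_zero hr0
    rw [hc, Polynomial.isUnit_C]
    rcases hu with hu | hu
    · refine isUnit_of_dvd_unit ⟨p.coeff 0, ?_⟩ hu
      rw [hpr, Polynomial.mul_coeff_zero, mul_comm]
    · refine isUnit_of_dvd_unit ⟨p.leadingCoeff, ?_⟩ hu
      rw [hpr, Polynomial.leadingCoeff_mul, hc, Polynomial.leadingCoeff_C, mul_comm]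
      simp
  rcases Nat.eq_zero_or_pos f.natDegree with hf | hf
  · exact Or.inl (key g f (by rw [hfg, mul_comm]) hf)
  · exact Or.inr (key f g hfg (by omega))

lemma aux_fse_X1 : (MvPolynomial.finSuccEquiv ℂ 1) (X 1) = Polynomial.C (X 0) := by
  rw [show (1 : Fin 2) = (0 : Fin 1).succ from rfl, finSuccEquiv_X_succ]

lemma aux_fse_C (c : ℂ) : (MvPolynomial.finSuccEquiv ℂ 1) (C c) = Polynomial.C (C c) := by
  simp [finSuccEquiv_apply]

/-- `a·x - b·y` with `a ≠ 0` is irreducible in `ℂ[x,y]`. -/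
lemma aux_irred_lin (a b : ℂ) (ha : a ≠ 0) :
    Irreducible (C a * X 0 - C b * X 1 : MvPolynomial (Fin 2) ℂ) := by
  rw [← MulEquiv.irreducible_iff (MvPolynomial.finSuccEquiv ℂ 1).toMulEquiv]
  have key : (MvPolynomial.finSuccEquiv ℂ 1) (C a * X 0 - C b * X 1)
      = Polynomial.C (C a) * Polynomial.X + Polynomial.C (-(C b * X 0)) := by
    rw [map_sub, map_mul, map_mul, aux_fse_X1, aux_fse_C, aux_fse_C, finSuccEquiv_X_zero]
    rw [← Polynomial.C_mul, Polynomial.C_neg]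
    ring
  rw [show (MvPolynomial.finSuccEquiv ℂ 1).toMulEquiv (C a * X 0 - C b * X 1)
      = (MvPolynomial.finSuccEquiv ℂ 1) (C a * X 0 - C b * X 1) from rfl, key]
  apply aux_irred_of_natDegree_one
  · exact Polynomial.natDegree_linear (by simp [ha])
  · right
    rw [Polynomial.leadingCoeff, Polynomial.natDegree_linear (by simp [ha])]
    simp [ha]

/-- `x·y - c` with `c ≠ 0` is irreducible in `ℂ[x,y]`. -/
lemma aux_irred_hyp (c : ℂ) (hc : c ≠ 0) :
    Irreducible (X 0 * X 1 - C c : MvPolynomial (Fin 2) ℂ) := by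
  rw [← MulEquiv.irreducible_iff (MvPolynomial.finSuccEquiv ℂ 1).toMulEquiv]
  have key : (MvPolynomial.finSuccEquiv ℂ 1) (X 0 * X 1 - C c)
      = Polynomial.C (X 0) * Polynomial.X + Polynomial.C (-(C c)) := by
    rw [map_sub, map_mul, aux_fse_X1, aux_fse_C, finSuccEquiv_X_zero, Polynomial.C_neg]
    ring
  rw [show (MvPolynomial.finSuccEquiv ℂ 1).toMulEquiv (X 0 * X 1 - C c)
      = (MvPolynomial.finSuccEquiv ℂ 1) (X 0 * X 1 - C c) from rfl, key]
  apply aux_irred_of_natDegree_one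
  · exact Polynomial.natDegree_linear (MvPolynomial.X_ne_zero 0)
  · left
    simp only [Polynomial.coeff_add, Polynomial.coeff_C_mul, Polynomial.coeff_X_zero,
      mul_zero, Polynomial.coeff_C, if_pos rfl, zero_add, if_true]
    rw [isUnit_iff_exists_inv]
    refine ⟨-(C c⁻¹), ?_⟩
    rw [neg_mul_neg, ← C_mul, mul_inv_cancel₀ hc, C_1]

lemma aux_td_lin_le (a b : ℂ) (i j : Fin 2) :
    (C a * X i - C b * X j : MvPolynomial (Fin 2) ℂ).totalDegree ≤ 1 := by
  refine (totalDegree_sub _ _).trans (max_le ?_ ?_) <;>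
    exact (totalDegree_mul _ _).trans (by simp [totalDegree_X, totalDegree_C])

/-- For `r₁(t) = (a₁t² + b₁)/t` and `rₙ(t) = (aₙt² + bₙ)/t` with `a₁,b₁,aₙ,bₙ ∈ ℂ*`,
there is a nonzero irreducible polynomial `h ∈ ℂ[x,y]` with `h(r₁(t), rₙ(t)) = 0` for all
`t ∈ ℂ*`, `deg h ≤ 2`, and `deg h = 1` iff `α = a₁bₙ - aₙb₁ = 0`. -/
theorem exists_irreducible_conic (a₁ b₁ aₙ bₙ : ℂ)
    (ha₁ : a₁ ≠ 0) (hb₁ : b₁ ≠ 0) (haₙ : aₙ ≠ 0) (hbₙ : bₙ ≠ 0) :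
    ∃ h : MvPolynomial (Fin 2) ℂ, h ≠ 0 ∧ Irreducible h ∧
      (∀ t : ℂ, t ≠ 0 →
        eval ![(a₁ * t ^ 2 + b₁) / t, (aₙ * t ^ 2 + bₙ) / t] h = 0) ∧
      h.totalDegree ≤ 2 ∧ (h.totalDegree = 1 ↔ a₁ * bₙ - aₙ * b₁ = 0) := by
  by_cases hα : a₁ * bₙ - aₙ * b₁ = 0
  · -- linear case
    refine ⟨C aₙ * X 0 - C a₁ * X 1, ?_, aux_irred_lin aₙ a₁ haₙ, ?_, ?_, ?_⟩
    · exact (aux_irred_lin aₙ a₁ haₙ).ne_zero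
    · intro t ht
      simp only [map_sub, map_mul, eval_C, eval_X, Matrix.cons_val_zero, Matrix.cons_val_one,
        Matrix.head_cons]
      field_simp
      linear_combination -hα
    · exact (aux_td_lin_le aₙ a₁ 0 1).trans (by norm_num)
    · have e2 : (Finsupp.single (1:Fin 2) 1) ≠ Finsupp.single 0 1 := by
        intro hh; have := DFunLike.congr_fun hh 0; simp [Finsupp.single_apply] at this
      have hco : coeff (Finsupp.single 0 1)
          (C aₙ * X 0 - C a₁ * X 1 : MvPolynomial (Fin 2) ℂ) = aₙ := by
        simp only [coeff_sub, coeff_C_mul, coeff_X', if_pos rfl, if_neg e2]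
        simp
      have hge : 1 ≤ (C aₙ * X 0 - C a₁ * X 1 : MvPolynomial (Fin 2) ℂ).totalDegree := by
        have hmem : Finsupp.single (0:Fin 2) 1 ∈
            (C aₙ * X 0 - C a₁ * X 1 : MvPolynomial (Fin 2) ℂ).support := by
          rw [mem_support_iff, hco]; exact haₙ
        have := le_totalDegree hmem
        simpa using this
      exact ⟨fun _ => hα, fun _ => le_antisymm (aux_td_lin_le aₙ a₁ 0 1) hge⟩
  · -- conic case
    set α := a₁ * bₙ - aₙ * b₁ with hαdef
    set h : MvPolynomial (Fin 2) ℂ :=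
      (C bₙ * X 0 - C b₁ * X 1) * (C a₁ * X 1 - C aₙ * X 0) - C (α ^ 2) with hdef
    -- change of variables
    have hC : (C a₁ * C bₙ - C aₙ * C b₁ : MvPolynomial (Fin 2) ℂ) * C α⁻¹ = 1 := by
      rw [← C_mul, ← C_mul, ← C_sub, ← C_mul, mul_inv_cancel₀ hα, C_1]
    have h1 : (aeval ![C bₙ * X 0 - C b₁ * X 1, C a₁ * X 1 - C aₙ * X 0]).comp
        (aeval ![C (a₁/α) * X 0 + C (b₁/α) * X 1, C (aₙ/α) * X 0 + C (bₙ/α) * X 1])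
        = AlgHom.id ℂ (MvPolynomial (Fin 2) ℂ) := by
      apply MvPolynomial.algHom_ext
      intro i
      fin_cases i <;>
        simp only [AlgHom.comp_apply, aeval_X, Matrix.cons_val_zero, Matrix.cons_val_one,
          Matrix.head_cons, map_add, map_mul, map_sub, aeval_C, algebraMap_eq,
          AlgHom.id_apply, Fin.isValue, Fin.mk_zero, Fin.mk_one] <;>
        simp only [div_eq_mul_inv, C_mul] <;>
        [linear_combination (X 0 : MvPolynomial (Fin 2) ℂ) * hC;
         linear_combination (X 1 : MvPolynomial (Fin 2) ℂ) * hC]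
    have h2 : (aeval ![C (a₁/α) * X 0 + C (b₁/α) * X 1, C (aₙ/α) * X 0 + C (bₙ/α) * X 1]).comp
        (aeval ![C bₙ * X 0 - C b₁ * X 1, C a₁ * X 1 - C aₙ * X 0])
        = AlgHom.id ℂ (MvPolynomial (Fin 2) ℂ) := by
      apply MvPolynomial.algHom_ext
      intro i
      fin_cases i <;>
        simp only [AlgHom.comp_apply, aeval_X, Matrix.cons_val_zero, Matrix.cons_val_one,
          Matrix.head_cons, map_add, map_mul, map_sub, aeval_C, algebraMap_eq,
          AlgHom.id_apply, Fin.isValue, Fin.mk_zero, Fin.mk_one] <;>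
        simp only [div_eq_mul_inv, C_mul] <;>
        [linear_combination (X 0 : MvPolynomial (Fin 2) ℂ) * hC;
         linear_combination (X 1 : MvPolynomial (Fin 2) ℂ) * hC]
    have hφ : (AlgEquiv.ofAlgHom _ _ h1 h2) (X 0 * X 1 - C (α ^ 2)) = h := by
      rw [show ∀ p, (AlgEquiv.ofAlgHom _ _ h1 h2) p
          = (aeval ![C bₙ * X 0 - C b₁ * X 1, C a₁ * X 1 - C aₙ * X 0]) p from fun p => rfl]
      simp only [map_sub, map_mul, aeval_X, aeval_C, algebraMap_eq,
        Matrix.cons_val_zero, Matrix.cons_val_one, Matrix.head_cons, hdef]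
    have hirr : Irreducible h := by
      rw [← hφ]
      exact (aux_irred_hyp (α ^ 2) (pow_ne_zero 2 hα)).map
        (AlgEquiv.ofAlgHom _ _ h1 h2).toMulEquiv
    -- expanded form of h, for coefficient extraction
    have hexp : h = C (-(aₙ*bₙ)) * X 0 ^ 2 + C (a₁*bₙ + aₙ*b₁) * (X 0 * X 1)
        + C (-(a₁*b₁)) * X 1 ^ 2 - C (α ^ 2) := by
      rw [hdef]
      simp only [C_neg, C_add, C_mul]
      ring
    have hge2 : 2 ≤ h.totalDegree := by
      have hxy : (X 0 * X 1 : MvPolynomial (Fin 2) ℂ)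
          = monomial (Finsupp.single 0 1 + Finsupp.single 1 1) 1 := by
        rw [X, X, monomial_mul, one_mul]
      have e1 : (Finsupp.single (0:Fin 2) 1 + Finsupp.single 1 1) ≠ Finsupp.single 0 2 := by
        intro hh; have := DFunLike.congr_fun hh 1; simp [Finsupp.single_apply] at this
      have e2 : (Finsupp.single (1:Fin 2) 2) ≠ Finsupp.single 0 2 := by
        intro hh; have := DFunLike.congr_fun hh 0; simp [Finsupp.single_apply] at this
      have e3 : (0 : Fin 2 →₀ ℕ) ≠ Finsupp.single 0 2 := by
        intro hh; have := DFunLike.congr_fun hh 0; simp [Finsupp.single_apply] at this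
      have hco : coeff (Finsupp.single 0 2) h = -(aₙ*bₙ) := by
        rw [hexp, hxy]
        simp only [coeff_sub, coeff_add, coeff_C_mul, coeff_monomial, coeff_X_pow, coeff_C,
          if_pos rfl, if_neg e1, if_neg e2, if_neg e3]
        simp
      have hmem : Finsupp.single (0:Fin 2) 2 ∈ h.support := by
        rw [mem_support_iff, hco]
        simp [haₙ, hbₙ]
      have := le_totalDegree hmem
      simpa using this
    refine ⟨h, hirr.ne_zero, hirr, ?_, ?_, ?_⟩
    · intro t ht
      rw [hdef]
      simp only [map_sub, map_mul, eval_C, eval_X, Matrix.cons_val_zero, Matrix.cons_val_one,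
        Matrix.head_cons]
      field_simp
      ring
    · rw [hdef]
      refine (totalDegree_sub _ _).trans (max_le ?_ (by rw [totalDegree_C]; omega))
      refine (totalDegree_mul _ _).trans ?_
      have := aux_td_lin_le bₙ b₁ 0 1
      have := aux_td_lin_le a₁ aₙ 1 0
      omega
    · constructor
      · intro hco; omega
      · intro hz; exact absurd hz hα
end

section
/- Let a_1, b_1 ∈ ℂ* with r_1(t) = (a_1 t^2 + b_1)/t, and let r_n(t) = (a_n t^2 + b_n)/t with a_n, b_n ∈ ℂ* and α = a_1 b_n - a_n b_1 ≠ 0. Let r_k(t) = (c_k t^4 + d_k t^2 + e_k)/t^2. Then the degree-2 polynomial L̃_k(x,y) = -((a_1 a_n e_k - b_1 b_n c_k)/(a_1 b_1 α))·x^2 + ((a_1^2 e_k - b_1^2 c_k)/(a_1 b_1 α))·x·y - (a_1^2 e_k - a_1 b_1 d_k + b_1^2 c_k)/(a_1 b_1) satisfies r_k(t) = L̃_k(r_1(t), r_n(t)) for all t ∈ ℂ*. -/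
/-- With `α = a₁bₙ - aₙb₁ ≠ 0` and `rₖ(t) = (cₖt⁴ + dₖt² + eₖ)/t²`, the degree-2
polynomial `L̃ₖ(x,y)` with the stated coefficients satisfies
`rₖ(t) = L̃ₖ(r₁(t), rₙ(t))` for all `t ∈ ℂ*`. -/
theorem quadratic_expression (a₁ b₁ aₙ bₙ cₖ dₖ eₖ : ℂ)
    (ha₁ : a₁ ≠ 0) (hb₁ : b₁ ≠ 0) (haₙ : aₙ ≠ 0) (hbₙ : bₙ ≠ 0)
    (hα : a₁ * bₙ - aₙ * b₁ ≠ 0) :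
    ∀ t : ℂ, t ≠ 0 →
      (cₖ * t ^ 4 + dₖ * t ^ 2 + eₖ) / t ^ 2 =
        -((a₁ * aₙ * eₖ - b₁ * bₙ * cₖ) / (a₁ * b₁ * (a₁ * bₙ - aₙ * b₁)))
            * ((a₁ * t ^ 2 + b₁) / t) ^ 2
          + ((a₁ ^ 2 * eₖ - b₁ ^ 2 * cₖ) / (a₁ * b₁ * (a₁ * bₙ - aₙ * b₁)))
            * (((a₁ * t ^ 2 + b₁) / t) * ((aₙ * t ^ 2 + bₙ) / t))
          - (a₁ ^ 2 * eₖ - a₁ * b₁ * dₖ + b₁ ^ 2 * cₖ) / (a₁ * b₁) := by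
  intro t ht
  have h2 : t ^ 2 ≠ 0 := pow_ne_zero 2 ht
  have hd : a₁ * b₁ * (a₁ * bₙ - aₙ * b₁) ≠ 0 := mul_ne_zero (mul_ne_zero ha₁ hb₁) hα
  have hab : a₁ * b₁ ≠ 0 := mul_ne_zero ha₁ hb₁
  have hd1 : a₁ * b₁ * (a₁ * bₙ - aₙ * b₁) * t ^ 2 ≠ 0 := mul_ne_zero hd h2
  have hd2 : a₁ * b₁ * (a₁ * bₙ - aₙ * b₁) * (t * t) ≠ 0 := mul_ne_zero hd (mul_ne_zero ht ht)
  rw [div_pow, ← neg_div, div_mul_div_comm, div_mul_div_comm, div_mul_div_comm,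
    div_add_div _ _ hd1 hd2, div_sub_div _ _ (mul_ne_zero hd1 hd2) hab,
    div_eq_div_iff h2 (mul_ne_zero (mul_ne_zero hd1 hd2) hab)]
  ring
end
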